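/- arXiv:2504.09913 — 4 statements merged into one kernel-verified Lean document; each statement's English description precedes it below -/
import Mathlib

section
/- Consider a finite MDP such that P^π g⋆ = g⋆ for every deterministic policy π, where (g⋆, h⋆) is a solution of the modified Bellman equations. Run Anc-VI with coefficients satisfying λ_{k+1} ≤ λ_k < 1 for all k ≥ 1 (convention λ_0 = 1), with π_k a greedy policy for V^k. Then for every k ≥ 1, ‖g⋆ − g^{π_k}‖_∞ ≤ ‖TV^k − V^k − g⋆‖_∞ ≤ 2 (∑_{i=0}^k (∏_{j=i+1}^k (1−λ_j)) λ_i²) ‖V^0 − h⋆‖_∞. -/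
open Finset Filter

noncomputable section

/-- A finite Markov decision process: a transition kernel `P` assigning to each
state-action pair a probability distribution over states, and a reward `r`. -/
structure FinMDP (S A : Type) [Fintype S] [Fintype A] where
  P : S → A → S → ℝ
  r : S → A → ℝ
  P_nonneg : ∀ s a s', 0 ≤ P s a s'
  P_sum_one : ∀ s a, ∑ s', P s a s' = 1

variable {S A : Type} [Fintype S] [Nonempty S] [Fintype A] [Nonempty A]

/-- The transition operator `P^π` induced by a deterministic policy `π`. -/
def Pop (M : FinMDP S A) (p : S → A) (V : S → ℝ) : S → ℝ :=
  fun s => ∑ s', M.P s (p s) s' * V s'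

/-- The reward vector `r^π` induced by a deterministic policy `π`. -/
def rPol (M : FinMDP S A) (p : S → A) : S → ℝ := fun s => M.r s (p s)

/-- The Bellman optimality operator `T`. -/
def bellman (M : FinMDP S A) (V : S → ℝ) : S → ℝ :=
  fun s => Finset.univ.sup' Finset.univ_nonempty
    (fun a => M.r s a + ∑ s', M.P s a s' * V s')

/-- A deterministic policy `π` is greedy for `V` if `r^π + P^π V = T V`. -/
def IsGreedy (M : FinMDP S A) (p : S → A) (V : S → ℝ) : Prop :=
  rPol M p + Pop M p V = bellman M V

/-- `(g, h)` is a solution of the modified Bellman equations: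
`max_π P^π g = g`, `max_π (r^π + P^π h) = h + g` (entrywise maxima over
deterministic policies, equivalently over actions), and some deterministic
policy attains both maxima simultaneously. -/
def IsMBESolution (M : FinMDP S A) (g h : S → ℝ) : Prop :=
  (∀ s, (Finset.univ.sup' Finset.univ_nonempty
      fun a => ∑ s', M.P s a s' * g s') = g s) ∧
  (∀ s, bellman M h s = h s + g s) ∧
  (∃ p : S → A, Pop M p g = g ∧ rPol M p + Pop M p h = h + g)

/-- The average reward `g^π(s) = liminf_{T→∞} (1/T) ∑_{t<T} ((P^π)^t r^π)(s)`. -/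
def avgReward (M : FinMDP S A) (p : S → A) : S → ℝ :=
  fun s => Filter.liminf
    (fun T : ℕ => (1 / (T : ℝ)) * ∑ t ∈ Finset.range T, ((Pop M p)^[t] (rPol M p)) s)
    Filter.atTop

/-! ### Auxiliary lemmas -/

section Aux

set_option linter.unusedSectionVars false

lemma P_bound (M : FinMDP S A) (s : S) (a : A) (W : S → ℝ) :
    |∑ s', M.P s a s' * W s'| ≤ ‖W‖ := by
  calc |∑ s', M.P s a s' * W s'| ≤ ∑ s', |M.P s a s' * W s'| := Finset.abs_sum_le_sum_abs _ _
    _ ≤ ∑ s', M.P s a s' * ‖W‖ := by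
        refine Finset.sum_le_sum fun s' _ => ?_
        rw [abs_mul, abs_of_nonneg (M.P_nonneg s a s')]
        exact mul_le_mul_of_nonneg_left
          ((Real.norm_eq_abs _ ▸ norm_le_pi_norm W s')) (M.P_nonneg s a s')
    _ = ‖W‖ := by rw [← Finset.sum_mul, M.P_sum_one, one_mul]

lemma P_mono_bound (M : FinMDP S A) (s : S) (a : A) (U V : S → ℝ) :
    ∑ s', M.P s a s' * U s' ≤ ∑ s', M.P s a s' * V s' + ‖U - V‖ := by
  have h := (abs_le.1 (P_bound M s a (U - V))).2
  have heq : ∑ s', M.P s a s' * (U - V) s'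
      = ∑ s', M.P s a s' * U s' - ∑ s', M.P s a s' * V s' := by
    simp [Pi.sub_apply, mul_sub, Finset.sum_sub_distrib]
  linarith [heq ▸ h]

lemma bellman_nonexpansive (M : FinMDP S A) (U V : S → ℝ) :
    ‖bellman M U - bellman M V‖ ≤ ‖U - V‖ := by
  rw [pi_norm_le_iff_of_nonneg (norm_nonneg _)]
  intro s
  rw [Real.norm_eq_abs, Pi.sub_apply, abs_le]
  constructor
  · have h : bellman M V s ≤ bellman M U s + ‖V - U‖ := by
      refine Finset.sup'_le _ _ fun a ha => ?_
      calc M.r s a + ∑ s', M.P s a s' * V s'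
          ≤ M.r s a + (∑ s', M.P s a s' * U s' + ‖V - U‖) := by
            linarith [P_mono_bound M s a V U]
        _ ≤ bellman M U s + ‖V - U‖ := by
            have := Finset.le_sup' (fun a => M.r s a + ∑ s', M.P s a s' * U s') ha
            simp only [bellman]; linarith
    have hn : ‖V - U‖ = ‖U - V‖ := norm_sub_rev _ _
    linarith
  · have h : bellman M U s ≤ bellman M V s + ‖U - V‖ := by
      refine Finset.sup'_le _ _ fun a ha => ?_
      calc M.r s a + ∑ s', M.P s a s' * U s'
          ≤ M.r s a + (∑ s', M.P s a s' * V s' + ‖U - V‖) := by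
            linarith [P_mono_bound M s a U V]
        _ ≤ bellman M V s + ‖U - V‖ := by
            have := Finset.le_sup' (fun a => M.r s a + ∑ s', M.P s a s' * V s') ha
            simp only [bellman]; linarith
    linarith

lemma sup'_add_const (f : A → ℝ) (c : ℝ) :
    (Finset.univ.sup' Finset.univ_nonempty fun a => f a + c)
      = Finset.univ.sup' Finset.univ_nonempty f + c := by
  apply le_antisymm
  · exact Finset.sup'_le _ _ fun a ha => add_le_add_left (Finset.le_sup' f ha) c
  · obtain ⟨a, ha, hEq⟩ := Finset.exists_mem_eq_sup' (Finset.univ_nonempty (α := A)) f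
    rw [hEq]
    exact Finset.le_sup' (fun a => f a + c) ha

lemma bellman_add_smul_g (M : FinMDP S A) {g : S → ℝ}
    (hg : ∀ s a, ∑ s', M.P s a s' * g s' = g s) (V : S → ℝ) (t : ℝ) :
    bellman M (V + t • g) = bellman M V + t • g := by
  funext s
  have h1 : ∀ a, M.r s a + ∑ s', M.P s a s' * (V + t • g) s'
      = (M.r s a + ∑ s', M.P s a s' * V s') + t * g s := by
    intro a
    have h : ∑ s', M.P s a s' * (V + t • g) s'
        = ∑ s', M.P s a s' * V s' + t * ∑ s', M.P s a s' * g s' := by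
      rw [Finset.mul_sum, ← Finset.sum_add_distrib]
      apply Finset.sum_congr rfl; intro x _
      simp [Pi.add_apply, Pi.smul_apply, smul_eq_mul]; ring
    rw [h, hg s a]; ring
  have h2 : bellman M (V + t • g) s
      = Finset.univ.sup' Finset.univ_nonempty
          (fun a => (M.r s a + ∑ s', M.P s a s' * V s') + t * g s) := by
    simp only [bellman]
    exact Finset.sup'_congr _ rfl (fun a _ => h1 a)
  rw [h2, sup'_add_const]
  rfl

lemma Pop_norm_le (M : FinMDP S A) (p : S → A) (W : S → ℝ) : ‖Pop M p W‖ ≤ ‖W‖ := by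
  rw [pi_norm_le_iff_of_nonneg (norm_nonneg _)]
  intro s
  rw [Real.norm_eq_abs]
  exact P_bound M s (p s) W

lemma Pop_iter_norm_le (M : FinMDP S A) (p : S → A) (W : S → ℝ) :
    ∀ t : ℕ, ‖(Pop M p)^[t] W‖ ≤ ‖W‖ := by
  intro t
  induction t with
  | zero => exact le_refl _
  | succ t ih =>
    rw [Function.iterate_succ_apply']
    exact (Pop_norm_le M p _).trans ih

lemma Pop_add (M : FinMDP S A) (p : S → A) (U V : S → ℝ) :
    Pop M p (U + V) = Pop M p U + Pop M p V := by
  funext s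
  simp [Pop, Pi.add_apply, mul_add, Finset.sum_add_distrib]

lemma Pop_sub (M : FinMDP S A) (p : S → A) (U V : S → ℝ) :
    Pop M p (U - V) = Pop M p U - Pop M p V := by
  funext s
  simp [Pop, Pi.sub_apply, mul_sub, Finset.sum_sub_distrib]

/-- The abstract rate estimate for anchored iterations of a nonexpansive map. -/
lemma anc_rate {E : Type*} [NormedAddCommGroup E] [NormedSpace ℝ E]
    (F : E → E) (hF : ∀ U V : E, ‖F U - F V‖ ≤ ‖U - V‖) (y : E) (hy : F y = y)
    (lam : ℕ → ℝ) (hlam0 : lam 0 = 1)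
    (hlam : ∀ j : ℕ, 1 ≤ j → lam j ∈ Set.Ico (0 : ℝ) 1)
    (hmono : ∀ k : ℕ, 1 ≤ k → lam (k + 1) ≤ lam k)
    (W : ℕ → E)
    (hW : ∀ k : ℕ, W (k + 1) = lam (k + 1) • W 0 + (1 - lam (k + 1)) • F (W k)) :
    ∀ k : ℕ, 1 ≤ k → ‖F (W k) - W k‖ ≤
      2 * (∑ i ∈ Finset.range (k + 1),
        (∏ j ∈ Finset.Icc (i + 1) k, (1 - lam j)) * lam i ^ 2) * ‖W 0 - y‖ := by
  set D := ‖W 0 - y‖ with hD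
  have hD0 : 0 ≤ D := norm_nonneg _
  set Sc : ℕ → ℝ := fun k => ∑ i ∈ Finset.range (k + 1),
    (∏ j ∈ Finset.Icc (i + 1) k, (1 - lam j)) * lam i ^ 2 with hSc
  have hl0 : ∀ j, 0 ≤ lam j := by
    intro j
    rcases Nat.eq_zero_or_pos j with h | h
    · rw [h, hlam0]; norm_num
    · exact (hlam j h).1
  have hl1 : ∀ j, lam j ≤ 1 := by
    intro j
    rcases Nat.eq_zero_or_pos j with h | h
    · rw [h, hlam0]
    · exact le_of_lt (hlam j h).2
  have hS0 : Sc 0 = 1 := by simp [hSc, hlam0]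
  have hSrec : ∀ k : ℕ, Sc (k + 1) = lam (k + 1) ^ 2 + (1 - lam (k + 1)) * Sc k := by
    intro k
    have h1 : Sc (k + 1) = (∑ i ∈ Finset.range (k + 1),
        (∏ j ∈ Finset.Icc (i + 1) (k + 1), (1 - lam j)) * lam i ^ 2)
        + (∏ j ∈ Finset.Icc (k + 1 + 1) (k + 1), (1 - lam j)) * lam (k + 1) ^ 2 :=
      Finset.sum_range_succ (fun i => (∏ j ∈ Finset.Icc (i + 1) (k + 1), (1 - lam j))
        * lam i ^ 2) (k + 1)
    rw [h1, Finset.Icc_eq_empty (by omega), Finset.prod_empty, one_mul]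
    have h2 : ∀ i ∈ Finset.range (k + 1),
        (∏ j ∈ Finset.Icc (i + 1) (k + 1), (1 - lam j)) * lam i ^ 2
        = (1 - lam (k + 1)) * ((∏ j ∈ Finset.Icc (i + 1) k, (1 - lam j)) * lam i ^ 2) := by
      intro i hi
      have hik := Finset.mem_range.1 hi
      rw [Finset.prod_Icc_succ_top (by omega : i + 1 ≤ k + 1)]
      ring
    rw [Finset.sum_congr rfl h2, ← Finset.mul_sum]
    ring
  have hA : ∀ k, ‖W k - y‖ ≤ D := by
    intro k
    induction k with
    | zero => exact le_refl D
    | succ k ih =>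
      have hid : W (k + 1) - y = lam (k + 1) • (W 0 - y) + (1 - lam (k + 1)) • (F (W k) - y) := by
        rw [hW k]; module
      rw [hid]
      calc ‖lam (k + 1) • (W 0 - y) + (1 - lam (k + 1)) • (F (W k) - y)‖
          ≤ ‖lam (k + 1) • (W 0 - y)‖ + ‖(1 - lam (k + 1)) • (F (W k) - y)‖ := norm_add_le _ _
        _ = lam (k + 1) * D + (1 - lam (k + 1)) * ‖F (W k) - F y‖ := by
            rw [norm_smul, norm_smul, Real.norm_eq_abs, Real.norm_eq_abs,
              abs_of_nonneg (hl0 _), abs_of_nonneg (by linarith [hl1 (k + 1)]), hy]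
        _ ≤ lam (k + 1) * D + (1 - lam (k + 1)) * D := by
            have h1 := (hF (W k) y).trans ih
            have h2 : (0:ℝ) ≤ 1 - lam (k + 1) := by linarith [hl1 (k + 1)]
            nlinarith
        _ = D := by ring
  set s : ℕ → E := fun k => F (W k) - W 0 with hs
  have hsb : ∀ k, ‖s k‖ ≤ 2 * D := by
    intro k
    calc ‖s k‖ = ‖(F (W k) - F y) + (y - W 0)‖ := by rw [hs]; simp only; rw [hy]; abel_nf
      _ ≤ ‖F (W k) - F y‖ + ‖y - W 0‖ := norm_add_le _ _
      _ ≤ ‖W k - y‖ + ‖y - W 0‖ := by linarith [hF (W k) y]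
      _ ≤ D + D := by
          have h1 := hA k
          have h2 : ‖y - W 0‖ = D := by rw [norm_sub_rev]
          linarith
      _ = 2 * D := by ring
  have hWs : ∀ k : ℕ, W (k + 1) = W 0 + (1 - lam (k + 1)) • s k := by
    intro k; rw [hW k, hs]; simp only; module
  have hB : ∀ k : ℕ, ‖s (k + 1) - s k‖ ≤ 2 * D * (Sc k - lam (k + 1)) := by
    intro k
    induction k with
    | zero =>
      have h1 : ‖s 1 - s 0‖ ≤ ‖W 1 - W 0‖ := by
        have h : s 1 - s 0 = F (W 1) - F (W 0) := by rw [hs]; simp only; abel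
        rw [h]; exact hF _ _
      have h2 : W 1 - W 0 = (1 - lam 1) • s 0 := by rw [hWs 0]; abel
      rw [h2, norm_smul, Real.norm_eq_abs, abs_of_nonneg (by linarith [hl1 1])] at h1
      calc ‖s 1 - s 0‖ ≤ (1 - lam 1) * ‖s 0‖ := h1
        _ ≤ (1 - lam 1) * (2 * D) := by
            have := hsb 0
            nlinarith [hl1 1]
        _ = 2 * D * (Sc 0 - lam 1) := by rw [hS0]; ring
    | succ k ih =>
      have h1 : ‖s (k + 2) - s (k + 1)‖ ≤ ‖W (k + 2) - W (k + 1)‖ := by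
        have h : s (k + 2) - s (k + 1) = F (W (k + 2)) - F (W (k + 1)) := by
          rw [hs]; simp only; abel
        rw [h]; exact hF _ _
      have h2 : W (k + 2) - W (k + 1)
          = (1 - lam (k + 1)) • (s (k + 1) - s k) + (lam (k + 1) - lam (k + 2)) • s (k + 1) := by
        rw [hWs (k + 1), hWs k]; module
      have h3 : ‖W (k + 2) - W (k + 1)‖
          ≤ (1 - lam (k + 1)) * ‖s (k + 1) - s k‖
            + (lam (k + 1) - lam (k + 2)) * ‖s (k + 1)‖ := by
        rw [h2]
        calc ‖(1 - lam (k + 1)) • (s (k + 1) - s k) + (lam (k + 1) - lam (k + 2)) • s (k + 1)‖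
            ≤ ‖(1 - lam (k + 1)) • (s (k + 1) - s k)‖
              + ‖(lam (k + 1) - lam (k + 2)) • s (k + 1)‖ := norm_add_le _ _
          _ = (1 - lam (k + 1)) * ‖s (k + 1) - s k‖
              + (lam (k + 1) - lam (k + 2)) * ‖s (k + 1)‖ := by
              rw [norm_smul, norm_smul, Real.norm_eq_abs, Real.norm_eq_abs,
                abs_of_nonneg (by linarith [hl1 (k + 1)]),
                abs_of_nonneg (by linarith [hmono (k + 1) (by omega)])]
      have h4 : (1 - lam (k + 1)) * ‖s (k + 1) - s k‖
          ≤ (1 - lam (k + 1)) * (2 * D * (Sc k - lam (k + 1))) :=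
        mul_le_mul_of_nonneg_left ih (by linarith [hl1 (k + 1)])
      have h5 : (lam (k + 1) - lam (k + 2)) * ‖s (k + 1)‖
          ≤ (lam (k + 1) - lam (k + 2)) * (2 * D) :=
        mul_le_mul_of_nonneg_left (hsb (k + 1)) (by linarith [hmono (k + 1) (by omega)])
      have h6 : (1 - lam (k + 1)) * (2 * D * (Sc k - lam (k + 1)))
          + (lam (k + 1) - lam (k + 2)) * (2 * D)
          = 2 * D * (Sc (k + 1) - lam (k + 2)) := by
        rw [hSrec k]; ring
      linarith
  intro k hk
  obtain ⟨m, rfl⟩ : ∃ m, k = m + 1 := ⟨k - 1, by omega⟩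
  have hid : F (W (m + 1)) - W (m + 1)
      = lam (m + 1) • s (m + 1) + (1 - lam (m + 1)) • (s (m + 1) - s m) := by
    have e1 : s (m + 1) = F (W (m + 1)) - W 0 := rfl
    have e2 : s (m + 1) - s m = F (W (m + 1)) - F (W m) := by
      show (F (W (m + 1)) - W 0) - (F (W m) - W 0) = _
      abel
    rw [e2, e1]
    nth_rewrite 2 [hW m]
    module
  have hbound : ‖F (W (m + 1)) - W (m + 1)‖
      ≤ lam (m + 1) * (2 * D) + (1 - lam (m + 1)) * (2 * D * (Sc m - lam (m + 1))) := by
    rw [hid]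
    calc ‖lam (m + 1) • s (m + 1) + (1 - lam (m + 1)) • (s (m + 1) - s m)‖
        ≤ ‖lam (m + 1) • s (m + 1)‖ + ‖(1 - lam (m + 1)) • (s (m + 1) - s m)‖ := norm_add_le _ _
      _ = lam (m + 1) * ‖s (m + 1)‖ + (1 - lam (m + 1)) * ‖s (m + 1) - s m‖ := by
          rw [norm_smul, norm_smul, Real.norm_eq_abs, Real.norm_eq_abs,
            abs_of_nonneg (hl0 _), abs_of_nonneg (by linarith [hl1 (m + 1)])]
      _ ≤ lam (m + 1) * (2 * D) + (1 - lam (m + 1)) * (2 * D * (Sc m - lam (m + 1))) := by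
          have h1 := mul_le_mul_of_nonneg_left (hsb (m + 1)) (hl0 (m + 1))
          have h2 := mul_le_mul_of_nonneg_left (hB m)
            (by linarith [hl1 (m + 1)] : (0:ℝ) ≤ 1 - lam (m + 1))
          linarith
  have hfin : lam (m + 1) * (2 * D) + (1 - lam (m + 1)) * (2 * D * (Sc m - lam (m + 1)))
      = 2 * Sc (m + 1) * D := by rw [hSrec m]; ring
  rw [hfin] at hbound
  exact hbound

end Aux

/-- Corollary (Anc-VI, MDP with `P^π g⋆ = g⋆` for all policies, nonincreasing
`λ_k < 1`, convention `λ_0 = 1`): anchored bound on the Bellman and policy errors. -/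
theorem ancvi_wc_bellman_rate
    (M : FinMDP S A) (g h : S → ℝ) (hsol : IsMBESolution M g h)
    (hcomm : ∀ p : S → A, Pop M p g = g)
    (lam : ℕ → ℝ) (hlam0 : lam 0 = 1)
    (hlam : ∀ j : ℕ, 1 ≤ j → lam j ∈ Set.Ico (0 : ℝ) 1)
    (hmono : ∀ k : ℕ, 1 ≤ k → lam (k + 1) ≤ lam k)
    (V : ℕ → S → ℝ) (pol : ℕ → S → A)
    (hV : ∀ k : ℕ, V (k + 1) = lam (k + 1) • V 0 + (1 - lam (k + 1)) • bellman M (V k))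
    (hpol : ∀ k : ℕ, IsGreedy M (pol k) (V k)) :
    ∀ k : ℕ, 1 ≤ k →
      ‖g - avgReward M (pol k)‖ ≤ ‖bellman M (V k) - V k - g‖ ∧
      ‖bellman M (V k) - V k - g‖ ≤
        2 * (∑ i ∈ Finset.range (k + 1),
              (∏ j ∈ Finset.Icc (i + 1) k, (1 - lam j)) * lam i ^ 2) * ‖V 0 - h‖ := by
  obtain ⟨hgsup, hbh, -⟩ := hsol
  have hg_sa : ∀ s a, ∑ s', M.P s a s' * g s' = g s := by
    intro s a
    have := congrFun (hcomm (fun _ => a)) s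
    simpa [Pop] using this
  -- Part 2 setup: the shifted iterates satisfy an anchored iteration for `F U = T U - g`.
  set F : (S → ℝ) → (S → ℝ) := fun U => bellman M U - g with hF
  have hFne : ∀ U U' : S → ℝ, ‖F U - F U'‖ ≤ ‖U - U'‖ := by
    intro U U'
    have : F U - F U' = bellman M U - bellman M U' := by rw [hF]; simp only; abel
    rw [this]
    exact bellman_nonexpansive M U U'
  have hFy : F h = h := by
    funext s
    rw [hF]
    simp only [Pi.sub_apply]
    rw [hbh s]; ring
  -- the correction coefficients
  set B : ℕ → ℝ := fun k => Nat.rec (0:ℝ) (fun n b => (1 - lam (n + 1)) * (b - 1)) k with hBdef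
  have hB0 : B 0 = 0 := rfl
  have hBs : ∀ k, B (k + 1) = (1 - lam (k + 1)) * (B k - 1) := fun k => rfl
  set Wf : ℕ → S → ℝ := fun k => V k + B k • g with hWf
  have hW0 : Wf 0 = V 0 := by
    rw [hWf]; simp only [hB0, zero_smul, add_zero]
  have hWrec : ∀ k, Wf (k + 1) = lam (k + 1) • Wf 0 + (1 - lam (k + 1)) • F (Wf k) := by
    intro k
    have hb : bellman M (Wf k) = bellman M (V k) + B k • g :=
      bellman_add_smul_g M hg_sa (V k) (B k)
    have hfk : F (Wf k) = bellman M (V k) + B k • g - g := by rw [hF]; simp only; rw [hb]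
    show V (k + 1) + B (k + 1) • g = _
    rw [hfk, hV k, hW0, hBs k]
    module
  have hres : ∀ k, F (Wf k) - Wf k = bellman M (V k) - V k - g := by
    intro k
    have hb : bellman M (Wf k) = bellman M (V k) + B k • g :=
      bellman_add_smul_g M hg_sa (V k) (B k)
    have hfk : F (Wf k) = bellman M (V k) + B k • g - g := by rw [hF]; simp only; rw [hb]
    rw [hfk]
    show _ - (V k + B k • g) = _
    abel
  have hrate := anc_rate F hFne h hFy lam hlam0 hlam hmono Wf hWrec
  intro k hk
  have part2 : ‖bellman M (V k) - V k - g‖ ≤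
      2 * (∑ i ∈ Finset.range (k + 1),
        (∏ j ∈ Finset.Icc (i + 1) k, (1 - lam j)) * lam i ^ 2) * ‖V 0 - h‖ := by
    have := hrate k hk
    rw [hres k, hW0] at this
    exact this
  refine ⟨?_, part2⟩
  -- Part 1: the policy error bound via the average reward.
  set Q : (S → ℝ) → (S → ℝ) := Pop M (pol k) with hQ
  set ε : S → ℝ := bellman M (V k) - V k - g with hε
  have hPg : Q g = g := hcomm (pol k)
  have h0 : rPol M (pol k) = V k - Q (V k) + g + ε := by
    have hgr := hpol k
    rw [hε, hQ, ← hgr]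
    abel
  have hiter : ∀ t : ℕ, Q^[t] (rPol M (pol k))
      = Q^[t] (V k) - Q^[t + 1] (V k) + g + Q^[t] ε := by
    intro t
    induction t with
    | zero => simpa using h0
    | succ t ih =>
      rw [Function.iterate_succ_apply' Q t (rPol M (pol k)), ih]
      rw [show Q^[t] (V k) - Q^[t + 1] (V k) + g + Q^[t] ε
          = (Q^[t] (V k) - Q^[t + 1] (V k) + g) + Q^[t] ε from rfl]
      rw [hQ, Pop_add, Pop_add, Pop_sub]
      rw [← hQ, hPg]
      rw [← Function.iterate_succ_apply' Q t (V k),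
        ← Function.iterate_succ_apply' Q (t + 1) (V k),
        ← Function.iterate_succ_apply' Q t ε]
  set C := ‖V k‖ with hC
  set Eb := ‖ε‖ with hEb
  have hC0 : 0 ≤ C := norm_nonneg _
  have hEb0 : 0 ≤ Eb := norm_nonneg _
  have hQVb : ∀ (t : ℕ) (s : S), |Q^[t] (V k) s| ≤ C := by
    intro t s
    have h1 : ‖Q^[t] (V k) s‖ ≤ ‖Q^[t] (V k)‖ := norm_le_pi_norm _ s
    have h2 := Pop_iter_norm_le M (pol k) (V k) t
    rw [Real.norm_eq_abs] at h1
    exact h1.trans h2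
  have hQeb : ∀ (t : ℕ) (s : S), |Q^[t] ε s| ≤ Eb := by
    intro t s
    have h1 : ‖Q^[t] ε s‖ ≤ ‖Q^[t] ε‖ := norm_le_pi_norm _ s
    have h2 := Pop_iter_norm_le M (pol k) ε t
    rw [Real.norm_eq_abs] at h1
    exact h1.trans h2
  have key : ∀ s₀ : S, |g s₀ - avgReward M (pol k) s₀| ≤ Eb := by
    intro s₀
    set aT : ℕ → ℝ := fun T => (1 / (T : ℝ))
      * ∑ t ∈ Finset.range T, ((Pop M (pol k))^[t] (rPol M (pol k))) s₀ with haT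
    have havg : avgReward M (pol k) s₀ = Filter.liminf aT Filter.atTop := rfl
    have hsum : ∀ T : ℕ, ∑ t ∈ Finset.range T, Q^[t] (rPol M (pol k)) s₀
        = V k s₀ - Q^[T] (V k) s₀ + T * g s₀ + ∑ t ∈ Finset.range T, Q^[t] ε s₀ := by
      intro T
      have h1 : ∀ t, Q^[t] (rPol M (pol k)) s₀
          = (Q^[t] (V k) s₀ - Q^[t + 1] (V k) s₀) + (g s₀ + Q^[t] ε s₀) := by
        intro t
        rw [hiter t]
        simp [Pi.add_apply, Pi.sub_apply]
        ring
      rw [Finset.sum_congr rfl (fun t _ => h1 t), Finset.sum_add_distrib,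
        Finset.sum_range_sub' (fun t => Q^[t] (V k) s₀) T, Finset.sum_add_distrib,
        Finset.sum_const, Finset.card_range]
      simp only [Function.iterate_zero_apply, nsmul_eq_mul]
      ring
    have habs : ∀ T : ℕ, 1 ≤ T → |aT T - g s₀| ≤ Eb + 2 * C / (T : ℝ) := by
      intro T hT
      have hT1 : (1 : ℝ) ≤ (T : ℝ) := by exact_mod_cast hT
      have hTpos : (0 : ℝ) < (T : ℝ) := by linarith
      have hTne : (T : ℝ) ≠ 0 := ne_of_gt hTpos
      have hexp : aT T - g s₀
          = (1 / (T : ℝ)) * ((V k s₀ - Q^[T] (V k) s₀) + ∑ t ∈ Finset.range T, Q^[t] ε s₀) := by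
        rw [haT]
        simp only
        rw [hsum T]
        field_simp
        ring
      rw [hexp, abs_mul, abs_of_nonneg (by positivity : (0:ℝ) ≤ 1 / (T : ℝ))]
      have hX : |V k s₀ - Q^[T] (V k) s₀| ≤ 2 * C := by
        have h1 := hQVb 0 s₀
        simp only [Function.iterate_zero_apply] at h1
        have h2 := hQVb T s₀
        calc |V k s₀ - Q^[T] (V k) s₀| ≤ |V k s₀| + |Q^[T] (V k) s₀| := abs_sub _ _
          _ ≤ 2 * C := by linarith
      have hY : |∑ t ∈ Finset.range T, Q^[t] ε s₀| ≤ (T : ℝ) * Eb := by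
        calc |∑ t ∈ Finset.range T, Q^[t] ε s₀| ≤ ∑ t ∈ Finset.range T, |Q^[t] ε s₀| :=
              Finset.abs_sum_le_sum_abs _ _
          _ ≤ ∑ _t ∈ Finset.range T, Eb := Finset.sum_le_sum (fun t _ => hQeb t s₀)
          _ = (T : ℝ) * Eb := by rw [Finset.sum_const, Finset.card_range, nsmul_eq_mul]
      calc (1 / (T : ℝ)) * |(V k s₀ - Q^[T] (V k) s₀) + ∑ t ∈ Finset.range T, Q^[t] ε s₀|
          ≤ (1 / (T : ℝ)) * (2 * C + (T : ℝ) * Eb) := by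
            have := (abs_add_le _ _).trans (add_le_add hX hY)
            exact mul_le_mul_of_nonneg_left this (by positivity)
        _ = Eb + 2 * C / (T : ℝ) := by field_simp; ring
    -- comparison sequences
    have hevlow : ∀ᶠ (T : ℕ) in Filter.atTop, g s₀ - Eb - 2 * C / (T : ℝ) ≤ aT T := by
      filter_upwards [Filter.eventually_ge_atTop 1] with T hT
      have := (abs_le.1 (habs T hT)).1
      linarith
    have hevhigh : ∀ᶠ (T : ℕ) in Filter.atTop, aT T ≤ g s₀ + Eb + 2 * C / (T : ℝ) := by
      filter_upwards [Filter.eventually_ge_atTop 1] with T hT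
      have := (abs_le.1 (habs T hT)).2
      linarith
    have hdivb : ∀ᶠ (T : ℕ) in Filter.atTop, 2 * C / (T : ℝ) ≤ 2 * C := by
      filter_upwards [Filter.eventually_ge_atTop 1] with T hT
      have hT1 : (1 : ℝ) ≤ (T : ℝ) := by exact_mod_cast hT
      exact div_le_self (by positivity) hT1
    have htlow : Filter.Tendsto (fun T : ℕ => g s₀ - Eb - 2 * C / (T : ℝ))
        Filter.atTop (nhds (g s₀ - Eb)) := by
      have := (tendsto_const_nhds (x := g s₀ - Eb) (f := (Filter.atTop : Filter ℕ))).sub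
        (tendsto_const_div_atTop_nhds_zero_nat (2 * C))
      simpa using this
    have hthigh : Filter.Tendsto (fun T : ℕ => g s₀ + Eb + 2 * C / (T : ℝ))
        Filter.atTop (nhds (g s₀ + Eb)) := by
      have := (tendsto_const_nhds (x := g s₀ + Eb) (f := (Filter.atTop : Filter ℕ))).add
        (tendsto_const_div_atTop_nhds_zero_nat (2 * C))
      simpa using this
    have haT_ub : ∀ᶠ (T : ℕ) in Filter.atTop, aT T ≤ g s₀ + Eb + 2 * C := by
      filter_upwards [hevhigh, hdivb] with T h1 h2
      linarith
    have haT_lb : ∀ᶠ (T : ℕ) in Filter.atTop, g s₀ - Eb - 2 * C ≤ aT T := by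
      filter_upwards [hevlow, hdivb] with T h1 h2
      linarith
    have hlow : g s₀ - Eb ≤ Filter.liminf aT Filter.atTop := by
      have h1 : Filter.liminf (fun T : ℕ => g s₀ - Eb - 2 * C / (T : ℝ)) Filter.atTop
          = g s₀ - Eb := htlow.liminf_eq
      calc g s₀ - Eb
          = Filter.liminf (fun T : ℕ => g s₀ - Eb - 2 * C / (T : ℝ)) Filter.atTop := h1.symm
        _ ≤ Filter.liminf aT Filter.atTop :=
            Filter.liminf_le_liminf hevlow htlow.isBoundedUnder_ge
              (Filter.isCoboundedUnder_ge_of_eventually_le _ haT_ub)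
    have hub_ub : ∀ᶠ (T : ℕ) in Filter.atTop,
        g s₀ + Eb + 2 * C / (T : ℝ) ≤ g s₀ + Eb + 2 * C := by
      filter_upwards [hdivb] with T h2
      linarith
    have hhigh : Filter.liminf aT Filter.atTop ≤ g s₀ + Eb := by
      have h1 : Filter.liminf (fun T : ℕ => g s₀ + Eb + 2 * C / (T : ℝ)) Filter.atTop
          = g s₀ + Eb := hthigh.liminf_eq
      calc Filter.liminf aT Filter.atTop
          ≤ Filter.liminf (fun T : ℕ => g s₀ + Eb + 2 * C / (T : ℝ)) Filter.atTop :=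
            Filter.liminf_le_liminf hevhigh
              (Filter.isBoundedUnder_of_eventually_ge haT_lb)
              (Filter.isCoboundedUnder_ge_of_eventually_le _ hub_ub)
        _ = g s₀ + Eb := h1
    rw [havg, abs_le]
    constructor
    · linarith
    · linarith
  rw [pi_norm_le_iff_of_nonneg hEb0]
  intro s₀
  rw [Pi.sub_apply, Real.norm_eq_abs]
  exact key s₀
end
end

section
/- Consider a finite MDP and let (g⋆, h⋆) be a solution of the modified Bellman equations. Let V ∈ ℝ^S and let π_V be a greedy policy for V, i.e. r^{π_V} + P^{π_V} V = TV. If P^{π_V} g⋆ = g⋆, then ‖g⋆ − g^{π_V}‖_∞ ≤ ‖TV − V − g⋆‖_∞. -/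
open Finset Filter

noncomputable section

variable {S A : Type} [Fintype S] [Nonempty S] [Fintype A] [Nonempty A]

/-- `P^π` contracts sup bounds. -/
lemma pop_abs_le (M : FinMDP S A) (p : S → A) {f : S → ℝ} {c : ℝ}
    (hf : ∀ s, |f s| ≤ c) (s : S) : |Pop M p f s| ≤ c := by
  have h1 : |∑ s', M.P s (p s) s' * f s'| ≤ ∑ s', M.P s (p s) s' * c := by
    refine (Finset.abs_sum_le_sum_abs _ _).trans (Finset.sum_le_sum fun s' _ => ?_)
    rw [abs_mul, abs_of_nonneg (M.P_nonneg _ _ _)]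
    exact mul_le_mul_of_nonneg_left (hf s') (M.P_nonneg _ _ _)
  simpa [Pop, ← Finset.sum_mul, M.P_sum_one] using h1

lemma pop_iter_abs_le (M : FinMDP S A) (p : S → A) {f : S → ℝ} {c : ℝ}
    (hf : ∀ s, |f s| ≤ c) (t : ℕ) (s : S) : |(Pop M p)^[t] f s| ≤ c := by
  induction t generalizing s with
  | zero => simpa using hf s
  | succ t ih =>
    rw [Function.iterate_succ_apply']
    exact pop_abs_le M p ih s

lemma pop_lin (M : FinMDP S A) (p : S → A) (f1 f2 f3 f4 : S → ℝ) (s : S) :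
    Pop M p (fun x => f1 x + f2 x + f3 x - f4 x) s
      = Pop M p f1 s + Pop M p f2 s + Pop M p f3 s - Pop M p f4 s := by
  simp [Pop, mul_add, mul_sub, Finset.sum_add_distrib, Finset.sum_sub_distrib]

/-- Proposition: if a greedy policy `π_V` for `V` satisfies `P^{π_V} g⋆ = g⋆`,
then the policy error is bounded by the Bellman error at `V`. -/
theorem bellman_error_bounds_policy_error
    (M : FinMDP S A) (g h : S → ℝ) (hsol : IsMBESolution M g h)
    (V : S → ℝ) (polV : S → A) (hgreedy : IsGreedy M polV V)
    (hfix : Pop M polV g = g) :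
    ‖g - avgReward M polV‖ ≤ ‖bellman M V - V - g‖ := by
  classical
  set δ : S → ℝ := fun s => bellman M V s - V s - g s with hδ
  set ε : ℝ := ‖bellman M V - V - g‖ with hε
  have hδε : ∀ s, |δ s| ≤ ε := by
    intro s
    have := norm_le_pi_norm (bellman M V - V - g) s
    simpa [hδ, Real.norm_eq_abs] using this
  have hVb : ∀ s, |V s| ≤ ‖V‖ := by
    intro s
    simpa [Real.norm_eq_abs] using norm_le_pi_norm V s
  have hgb : ∀ s, Pop M polV g s = g s := fun s => congrFun hfix s
  -- base identity for r^π
  have hr : ∀ s, rPol M polV s = δ s + g s + V s - Pop M polV V s := by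
    intro s
    have := congrFun hgreedy s
    simp only [Pi.add_apply] at this
    simp [hδ]
    linarith
  -- key identity by induction
  have key : ∀ t : ℕ, (Pop M polV)^[t] (rPol M polV)
      = fun s => (Pop M polV)^[t] δ s + g s + (Pop M polV)^[t] V s
        - (Pop M polV)^[t+1] V s := by
    intro t
    induction t with
    | zero =>
      funext s
      simpa using hr s
    | succ t ih =>
      funext s
      rw [Function.iterate_succ_apply', ih]
      have := pop_lin M polV ((Pop M polV)^[t] δ) g ((Pop M polV)^[t] V)
        ((Pop M polV)^[t+1] V) s
      rw [this, hgb s, ← Function.iterate_succ_apply' (Pop M polV) t δ,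
        ← Function.iterate_succ_apply' (Pop M polV) t V,
        ← Function.iterate_succ_apply' (Pop M polV) (t+1) V]
  -- sum identity
  have hsum : ∀ (T : ℕ) (s : S),
      ∑ t ∈ Finset.range T, (Pop M polV)^[t] (rPol M polV) s
        = (∑ t ∈ Finset.range T, (Pop M polV)^[t] δ s) + T * g s
          + (V s - (Pop M polV)^[T] V s) := by
    intro T s
    have h1 : ∀ t, (Pop M polV)^[t] (rPol M polV) s
        = (Pop M polV)^[t] δ s + g s + ((Pop M polV)^[t] V s - (Pop M polV)^[t+1] V s) := by
      intro t
      have := congrFun (key t) s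
      linarith
    calc ∑ t ∈ Finset.range T, (Pop M polV)^[t] (rPol M polV) s
        = ∑ t ∈ Finset.range T, ((Pop M polV)^[t] δ s + g s
            + ((Pop M polV)^[t] V s - (Pop M polV)^[t+1] V s)) :=
          Finset.sum_congr rfl fun t _ => h1 t
      _ = (∑ t ∈ Finset.range T, (Pop M polV)^[t] δ s) + T * g s
          + (V s - (Pop M polV)^[T] V s) := by
          rw [Finset.sum_add_distrib, Finset.sum_add_distrib,
            Finset.sum_range_sub' (fun t => (Pop M polV)^[t] V s) T]
          simp [mul_comm]
  -- bound on the averages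
  have hbound : ∀ (T : ℕ), 1 ≤ T → ∀ s,
      |(1 / (T : ℝ)) * ∑ t ∈ Finset.range T, (Pop M polV)^[t] (rPol M polV) s - g s|
        ≤ ε + 2 * ‖V‖ / T := by
    intro T hT s
    have hT0 : (T : ℝ) ≠ 0 := Nat.cast_ne_zero.mpr (by omega)
    have hTpos : (0 : ℝ) < T := by positivity
    have hS : |∑ t ∈ Finset.range T, (Pop M polV)^[t] δ s| ≤ T * ε := by
      calc |∑ t ∈ Finset.range T, (Pop M polV)^[t] δ s|
          ≤ ∑ t ∈ Finset.range T, |(Pop M polV)^[t] δ s| :=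
            Finset.abs_sum_le_sum_abs _ _
        _ ≤ ∑ _t ∈ Finset.range T, ε :=
            Finset.sum_le_sum fun t _ => pop_iter_abs_le M polV hδε t s
        _ = T * ε := by simp [mul_comm]
    have hD : |V s - (Pop M polV)^[T] V s| ≤ 2 * ‖V‖ := by
      have := pop_iter_abs_le M polV hVb T s
      have h2 := hVb s
      calc |V s - (Pop M polV)^[T] V s| ≤ |V s| + |(Pop M polV)^[T] V s| := abs_sub _ _
        _ ≤ 2 * ‖V‖ := by linarith
    have heq : (1 / (T : ℝ)) * ∑ t ∈ Finset.range T, (Pop M polV)^[t] (rPol M polV) s - g s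
        = (1 / (T : ℝ)) * ((∑ t ∈ Finset.range T, (Pop M polV)^[t] δ s)
            + (V s - (Pop M polV)^[T] V s)) := by
      rw [hsum T s]
      field_simp
      ring
    rw [heq, abs_mul, abs_of_nonneg (by positivity : (0:ℝ) ≤ 1 / (T:ℝ))]
    have habs : |(∑ t ∈ Finset.range T, (Pop M polV)^[t] δ s)
        + (V s - (Pop M polV)^[T] V s)| ≤ T * ε + 2 * ‖V‖ :=
      (abs_add_le _ _).trans (by linarith)
    calc (1 / (T : ℝ)) * |(∑ t ∈ Finset.range T, (Pop M polV)^[t] δ s)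
          + (V s - (Pop M polV)^[T] V s)|
        ≤ (1 / (T : ℝ)) * (T * ε + 2 * ‖V‖) :=
          mul_le_mul_of_nonneg_left habs (by positivity)
      _ = ε + 2 * ‖V‖ / T := by field_simp
  -- conclude via liminf
  have hεnn : 0 ≤ ε := norm_nonneg _
  rw [hε]
  rw [pi_norm_le_iff_of_nonneg hεnn]
  intro s
  set a : ℕ → ℝ := fun T => (1 / (T : ℝ)) * ∑ t ∈ Finset.range T, (Pop M polV)^[t] (rPol M polV) s with ha
  have havg : avgReward M polV s = liminf a atTop := rfl
  have htend : Tendsto (fun T : ℕ => 2 * ‖V‖ / T) atTop (nhds 0) :=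
    tendsto_const_div_atTop_nhds_zero_nat (2 * ‖V‖)
  have hub : ∀ᶠ T in atTop, a T ≤ g s + ε + 2 * ‖V‖ / T := by
    filter_upwards [eventually_ge_atTop 1] with T hT
    have := (abs_le.mp (hbound T hT s)).2
    simp only [ha]
    linarith
  have hlb : ∀ᶠ T in atTop, g s - ε - 2 * ‖V‖ / T ≤ a T := by
    filter_upwards [eventually_ge_atTop 1] with T hT
    have := (abs_le.mp (hbound T hT s)).1
    simp only [ha]
    linarith
  have htu : Tendsto (fun T : ℕ => g s + ε + 2 * ‖V‖ / T) atTop (nhds (g s + ε)) := by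
    simpa using (tendsto_const_nhds (x := g s + ε) (f := atTop)).add htend
  have htl : Tendsto (fun T : ℕ => g s - ε - 2 * ‖V‖ / T) atTop (nhds (g s - ε)) := by
    simpa using (tendsto_const_nhds (x := g s - ε) (f := atTop)).sub htend
  have hVnn : (0:ℝ) ≤ 2 * ‖V‖ := by positivity
  have hfrac : ∀ᶠ T : ℕ in atTop, 2 * ‖V‖ / (T:ℝ) ≤ 2 * ‖V‖ := by
    filter_upwards [eventually_ge_atTop 1] with T hT
    have hT1 : (1:ℝ) ≤ T := by exact_mod_cast hT
    calc 2 * ‖V‖ / (T:ℝ) ≤ 2 * ‖V‖ / 1 := div_le_div_of_nonneg_left hVnn one_pos hT1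
      _ = 2 * ‖V‖ := by norm_num
  have habdd_ge : atTop.IsBoundedUnder (· ≥ ·) a := by
    refine ⟨g s - ε - 2 * ‖V‖, Filter.eventually_map.mpr ?_⟩
    filter_upwards [hlb, hfrac] with T h1 h2
    simp only [ge_iff_le]
    linarith
  have habdd_le : atTop.IsBoundedUnder (· ≤ ·) a := by
    refine ⟨g s + ε + 2 * ‖V‖, Filter.eventually_map.mpr ?_⟩
    filter_upwards [hub, hfrac] with T h1 h2
    linarith
  have h1 : liminf a atTop ≤ g s + ε := by
    have := liminf_le_liminf hub habdd_ge
      (htu.isBoundedUnder_le.isCoboundedUnder_ge)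
    rwa [htu.liminf_eq] at this
  have h2 : g s - ε ≤ liminf a atTop := by
    have := liminf_le_liminf hlb htl.isBoundedUnder_ge
      (habdd_le.isCoboundedUnder_ge)
    rwa [htl.liminf_eq] at this
  have : |g s - avgReward M polV s| ≤ ε := by
    rw [havg]
    rw [abs_le]
    constructor <;> linarith
  simpa [Real.norm_eq_abs] using this
end
end

section
/- Consider a finite MDP and let (g⋆, h⋆) be a solution of the modified Bellman equations with simultaneous maximizer π⋆. Run Rx-VI with coefficients λ_k ∈ [0,1) and starting point V^0, where for each i ≥ 0, π_i is a greedy policy for V^i. For 0 ≤ i ≤ k−1 let M_i = λ_{i+1} I + (1−λ_{i+1}) P^{π_i} and N_i = λ_{i+1} I + (1−λ_{i+1}) P^{π⋆}. Then for every k ≥ 1, the following entrywise inequalities hold: V^k − (∑_{j=1}^k (1−λ_j)) g⋆ ≤ M_{k−1} M_{k−2} ⋯ M_0 (V^0 − h⋆) + h⋆, and h⋆ + N_{k−1} N_{k−2} ⋯ N_0 (V^0 − h⋆) ≤ V^k − (∑_{j=1}^k (1−λ_j)) g⋆. -/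
open Finset Filter

noncomputable section

variable {S A : Type} [Fintype S] [Nonempty S] [Fintype A] [Nonempty A]

/-- `prodApply ops j k v = ops (k-1) (ops (k-2) (⋯ (ops j v)))`, the descending
product of operators `ops (k-1), …, ops j` applied to `v`; it is `v` when `k ≤ j`
(the empty product is the identity). -/
def prodApply (ops : ℕ → (S → ℝ) → (S → ℝ)) (j : ℕ) : ℕ → (S → ℝ) → (S → ℝ)
  | 0, v => v
  | k + 1, v => if j ≤ k then ops k (prodApply ops j k v) else v

/-- Applying `Pop` to a pointwise inequality `u ≤ v₁ + v₂ + c·g`. -/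
lemma Pop3_le (M : FinMDP S A) (p : S → A) (u v1 v2 g : S → ℝ) (c : ℝ) (s : S)
    (hle : ∀ s', u s' ≤ v1 s' + v2 s' + c * g s') :
    Pop M p u s ≤ Pop M p v1 s + Pop M p v2 s + c * Pop M p g s := by
  simp only [Pop]
  rw [Finset.mul_sum, ← Finset.sum_add_distrib, ← Finset.sum_add_distrib]
  refine Finset.sum_le_sum fun s' _ => ?_
  have h1 := hle s'
  have h2 := M.P_nonneg s (p s) s'
  nlinarith

/-- Applying `Pop` to a pointwise inequality `v₁ + v₂ + c·g ≤ u`. -/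
lemma Pop3_ge (M : FinMDP S A) (p : S → A) (u v1 v2 g : S → ℝ) (c : ℝ) (s : S)
    (hle : ∀ s', v1 s' + v2 s' + c * g s' ≤ u s') :
    Pop M p v1 s + Pop M p v2 s + c * Pop M p g s ≤ Pop M p u s := by
  simp only [Pop]
  rw [Finset.mul_sum, ← Finset.sum_add_distrib, ← Finset.sum_add_distrib]
  refine Finset.sum_le_sum fun s' _ => ?_
  have h1 := hle s'
  have h2 := M.P_nonneg s (p s) s'
  nlinarith

/-- Lemma (Rx-VI sandwich): entrywise bounds on `V^k − (∑_{j=1}^k (1−λ_j)) g⋆`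
in terms of the products `M_{k−1}⋯M_0` and `N_{k−1}⋯N_0` applied to `V^0 − h⋆`,
where `M_i = λ_{i+1} I + (1−λ_{i+1}) P^{π_i}` and
`N_i = λ_{i+1} I + (1−λ_{i+1}) P^{π⋆}`. -/
theorem rxvi_sandwich
    (M : FinMDP S A) (g h : S → ℝ) (hsol : IsMBESolution M g h)
    (pstar : S → A) (hstar1 : Pop M pstar g = g)
    (hstar2 : rPol M pstar + Pop M pstar h = h + g)
    (lam : ℕ → ℝ) (hlam : ∀ j : ℕ, 1 ≤ j → lam j ∈ Set.Ico (0 : ℝ) 1)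
    (V : ℕ → S → ℝ) (pol : ℕ → S → A)
    (hV : ∀ k : ℕ, V (k + 1) = lam (k + 1) • V k + (1 - lam (k + 1)) • bellman M (V k))
    (hpol : ∀ i : ℕ, IsGreedy M (pol i) (V i)) :
    ∀ k : ℕ, 1 ≤ k →
      (V k - (∑ j ∈ Finset.Icc 1 k, (1 - lam j)) • g ≤
        prodApply (fun i W => lam (i + 1) • W + (1 - lam (i + 1)) • Pop M (pol i) W)
          0 k (V 0 - h) + h) ∧
      (h + prodApply (fun i W => lam (i + 1) • W + (1 - lam (i + 1)) • Pop M pstar W)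
          0 k (V 0 - h) ≤
        V k - (∑ j ∈ Finset.Icc 1 k, (1 - lam j)) • g) := by
  obtain ⟨hg, hbh, -⟩ := hsol
  -- pointwise key facts
  have hPg : ∀ (p : S → A) (s : S), Pop M p g s ≤ g s := by
    intro p s
    rw [← hg s]
    exact Finset.le_sup' (fun a => ∑ s', M.P s a s' * g s') (Finset.mem_univ (p s))
  have hrh : ∀ (p : S → A) (s : S), M.r s (p s) + Pop M p h s ≤ h s + g s := by
    intro p s
    rw [← hbh s]
    exact Finset.le_sup' (fun a => M.r s a + ∑ s', M.P s a s' * h s') (Finset.mem_univ (p s))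
  have hPsg : ∀ s, Pop M pstar g s = g s := fun s => congrFun hstar1 s
  have hrstar : ∀ s, M.r s (pstar s) + Pop M pstar h s = h s + g s := by
    intro s
    have := congrFun hstar2 s
    simpa [rPol] using this
  have hbell_ge : ∀ (k : ℕ) (s : S),
      M.r s (pstar s) + Pop M pstar (V k) s ≤ bellman M (V k) s := by
    intro k s
    exact Finset.le_sup' (fun a => M.r s a + ∑ s', M.P s a s' * V k s') (Finset.mem_univ (pstar s))
  have hbell_eq : ∀ (k : ℕ) (s : S),
      bellman M (V k) s = M.r s (pol k s) + Pop M (pol k) (V k) s := by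
    intro k s
    have := congrFun (hpol k) s
    simpa [rPol] using this.symm
  suffices key : ∀ k : ℕ,
      (V k - (∑ j ∈ Finset.Icc 1 k, (1 - lam j)) • g ≤
        prodApply (fun i W => lam (i + 1) • W + (1 - lam (i + 1)) • Pop M (pol i) W)
          0 k (V 0 - h) + h) ∧
      (h + prodApply (fun i W => lam (i + 1) • W + (1 - lam (i + 1)) • Pop M pstar W)
          0 k (V 0 - h) ≤
        V k - (∑ j ∈ Finset.Icc 1 k, (1 - lam j)) • g) by
    exact fun k _ => key k
  intro k
  induction k with
  | zero =>
    constructor <;> · intro s; simp [prodApply]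
  | succ k ih =>
    obtain ⟨ih1, ih2⟩ := ih
    obtain ⟨hl0, hl1⟩ := hlam (k + 1) (Nat.le_add_left 1 k)
    have hml : (0 : ℝ) ≤ 1 - lam (k + 1) := by linarith
    have hck : (0 : ℝ) ≤ ∑ j ∈ Finset.Icc 1 k, (1 - lam j) := by
      refine Finset.sum_nonneg fun j hj => ?_
      have := hlam j (Finset.mem_Icc.mp hj).1
      linarith [this.2]
    set c : ℝ := ∑ j ∈ Finset.Icc 1 k, (1 - lam j) with hc
    have hsum : ∑ j ∈ Finset.Icc 1 (k + 1), (1 - lam j) = c + (1 - lam (k + 1)) := by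
      rw [Finset.sum_Icc_succ_top (Nat.le_add_left 1 k)]
    set FA := prodApply (fun i W => lam (i + 1) • W + (1 - lam (i + 1)) • Pop M (pol i) W)
      0 k (V 0 - h) with hFA
    set GA := prodApply (fun i W => lam (i + 1) • W + (1 - lam (i + 1)) • Pop M pstar W)
      0 k (V 0 - h) with hGA
    have hFs : prodApply (fun i W => lam (i + 1) • W + (1 - lam (i + 1)) • Pop M (pol i) W)
        0 (k + 1) (V 0 - h) = lam (k + 1) • FA + (1 - lam (k + 1)) • Pop M (pol k) FA := by
      simp [prodApply, hFA]
    have hGs : prodApply (fun i W => lam (i + 1) • W + (1 - lam (i + 1)) • Pop M pstar W)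
        0 (k + 1) (V 0 - h) = lam (k + 1) • GA + (1 - lam (k + 1)) • Pop M pstar GA := by
      simp [prodApply, hGA]
    have ih1' : ∀ s, V k s ≤ FA s + h s + c * g s := by
      intro s
      have := ih1 s
      simp only [Pi.sub_apply, Pi.add_apply, Pi.smul_apply, smul_eq_mul] at this
      linarith
    have ih2' : ∀ s, GA s + h s + c * g s ≤ V k s := by
      intro s
      have := ih2 s
      simp only [Pi.sub_apply, Pi.add_apply, Pi.smul_apply, smul_eq_mul] at this
      linarith
    constructor
    · rw [hFs, hsum]
      intro s
      simp only [Pi.sub_apply, Pi.add_apply, Pi.smul_apply, smul_eq_mul]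
      have hVk : V (k + 1) s = lam (k + 1) * V k s + (1 - lam (k + 1)) * bellman M (V k) s := by
        rw [hV k]; simp
      -- bound on Pop (pol k) (V k) s
      have hPop : Pop M (pol k) (V k) s ≤
          Pop M (pol k) FA s + Pop M (pol k) h s + c * Pop M (pol k) g s :=
        Pop3_le M (pol k) (V k) FA h g c s ih1'
      have hPopg := hPg (pol k) s
      have hrh' := hrh (pol k) s
      have hbell : bellman M (V k) s ≤ h s + g s + Pop M (pol k) FA s + c * g s := by
        rw [hbell_eq k s]
        nlinarith
      have h1 : lam (k + 1) * V k s ≤ lam (k + 1) * (FA s + h s + c * g s) :=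
        mul_le_mul_of_nonneg_left (ih1' s) hl0
      have h2 : (1 - lam (k + 1)) * bellman M (V k) s ≤
          (1 - lam (k + 1)) * (h s + g s + Pop M (pol k) FA s + c * g s) :=
        mul_le_mul_of_nonneg_left hbell hml
      nlinarith
    · rw [hGs, hsum]
      intro s
      simp only [Pi.sub_apply, Pi.add_apply, Pi.smul_apply, smul_eq_mul]
      have hVk : V (k + 1) s = lam (k + 1) * V k s + (1 - lam (k + 1)) * bellman M (V k) s := by
        rw [hV k]; simp
      have hPop : Pop M pstar GA s + Pop M pstar h s + c * Pop M pstar g s ≤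
          Pop M pstar (V k) s :=
        Pop3_ge M pstar (V k) GA h g c s ih2'
      have hPopg := hPsg s
      have hrs := hrstar s
      have hbell : h s + g s + Pop M pstar GA s + c * g s ≤ bellman M (V k) s := by
        have := hbell_ge k s
        nlinarith
      have h1 : lam (k + 1) * (GA s + h s + c * g s) ≤ lam (k + 1) * V k s :=
        mul_le_mul_of_nonneg_left (ih2' s) hl0
      have h2 : (1 - lam (k + 1)) * (h s + g s + Pop M pstar GA s + c * g s) ≤
          (1 - lam (k + 1)) * bellman M (V k) s :=
        mul_le_mul_of_nonneg_left hbell hml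
      nlinarith
end
end

section
/- Consider a finite MDP and let (g⋆, h⋆) be a solution of the modified Bellman equations. Run Rx-VI with coefficients λ_k ∈ [0,1) satisfying limsup_k λ_k < 1, starting from V^0. Let E = { π : π a deterministic policy with P^π g⋆ = g⋆ } (E is nonempty since it contains the simultaneous maximizer π⋆). Then there exists K ≥ 0 such that for every k ≥ K and every state s, (TV^k)(s) = max_{π ∈ E} (r^π + P^π V^k)(s); that is, from iteration K onward the Bellman optimality operator value at V^k is attained by policies in E. -/
open Finset Filter

noncomputable section

variable {S A : Type} [Fintype S] [Nonempty S] [Fintype A] [Nonempty A]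

/-- Lemma (eventually only optimal-average policies are greedy): for Rx-VI with
`limsup λ_k < 1`, there is `K` such that for all `k ≥ K` and every state `s`,
`(T V^k)(s)` equals the maximum of `(r^π + P^π V^k)(s)` over the policies
`π ∈ E = {π : P^π g⋆ = g⋆}`. -/
theorem rxvi_eventually_greedy_in_E
    (M : FinMDP S A) (g h : S → ℝ) (hsol : IsMBESolution M g h)
    (lam : ℕ → ℝ) (hlam : ∀ j : ℕ, 1 ≤ j → lam j ∈ Set.Ico (0 : ℝ) 1)
    (hlimsup : Filter.limsup lam Filter.atTop < 1)
    (V : ℕ → S → ℝ)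
    (hV : ∀ k : ℕ, V (k + 1) = lam (k + 1) • V k + (1 - lam (k + 1)) • bellman M (V k)) :
    ∃ K : ℕ, ∀ k : ℕ, K ≤ k → ∀ s : S,
      IsGreatest {x : ℝ | ∃ p : S → A, Pop M p g = g ∧ x = (rPol M p + Pop M p (V k)) s}
        (bellman M (V k) s) := by
  classical
  obtain ⟨hg, hbe, p0, hp0g, hp0h⟩ := hsol
  have hPg_le : ∀ s a, ∑ s', M.P s a s' * g s' ≤ g s := fun s a => by
    rw [← hg s]
    exact Finset.le_sup' (fun a => ∑ s', M.P s a s' * g s') (Finset.mem_univ a)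
  have hp0good : ∀ s, ∑ s', M.P s (p0 s) s' * g s' = g s := fun s => congrFun hp0g s
  have hp0h' : ∀ s, M.r s (p0 s) + ∑ s', M.P s (p0 s) s' * h s' = h s + g s := fun s => by
    have := congrFun hp0h s
    simpa [rPol, Pop] using this
  -- weights n k
  set n : ℕ → ℝ := fun k => ∑ j ∈ Finset.range k, (1 - lam (j + 1)) with hn
  have hterm : ∀ j : ℕ, 0 ≤ 1 - lam (j + 1) := fun j => by
    have := (hlam (j + 1) (Nat.le_add_left 1 j)).2; linarith
  have hn0 : ∀ k, 0 ≤ n k := fun k =>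
    Finset.sum_nonneg fun j _ => hterm j
  have hnsucc : ∀ k, n (k + 1) = n k + (1 - lam (k + 1)) := fun k =>
    Finset.sum_range_succ _ k
  have hnmono : Monotone n := by
    apply monotone_nat_of_le_succ
    intro k; rw [hnsucc k]; linarith [hterm k]
  have hnzero : n 0 = 0 := by simp [hn]
  -- constants
  set C : ℝ := Finset.univ.sup' Finset.univ_nonempty (fun s => |V 0 s - h s|) with hC
  have hCb : ∀ s, |V 0 s - h s| ≤ C := fun s => by
    rw [hC]; exact Finset.le_sup' (fun s => |V 0 s - h s|) (Finset.mem_univ s)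
  set Hmax : ℝ := Finset.univ.sup' Finset.univ_nonempty h with hHm
  have hHmax : ∀ s, h s ≤ Hmax := fun s => by
    rw [hHm]; exact Finset.le_sup' h (Finset.mem_univ s)
  -- parametric bellman bounds
  have hsplit : ∀ (k : ℕ) (s : S) (a : A),
      ∑ s', M.P s a s' * V k s' =
        (∑ s', M.P s a s' * (V k s' - n k * g s')) + n k * ∑ s', M.P s a s' * g s' := by
    intro k s a
    rw [Finset.mul_sum, ← Finset.sum_add_distrib]
    exact Finset.sum_congr rfl fun s' _ => by ring
  have bell_ub : ∀ (k : ℕ) (s : S), (∀ s', V k s' - n k * g s' ≤ h s' + C) →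
      bellman M (V k) s ≤ h s + g s + C + n k * g s := by
    intro k s hub
    apply Finset.sup'_le
    intro a _
    have h1 : ∑ s', M.P s a s' * (V k s' - n k * g s') ≤ ∑ s', M.P s a s' * (h s' + C) :=
      Finset.sum_le_sum fun s' _ => mul_le_mul_of_nonneg_left (hub s') (M.P_nonneg s a s')
    have h2 : ∑ s', M.P s a s' * (h s' + C) = (∑ s', M.P s a s' * h s') + C := by
      rw [show (∑ s', M.P s a s' * (h s' + C)) =
          (∑ s', M.P s a s' * h s') + (∑ s', M.P s a s') * C by
        rw [Finset.sum_mul, ← Finset.sum_add_distrib]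
        exact Finset.sum_congr rfl fun s' _ => by ring]
      rw [M.P_sum_one, one_mul]
    have h3 : M.r s a + ∑ s', M.P s a s' * h s' ≤ bellman M h s :=
      Finset.le_sup' (fun a => M.r s a + ∑ s', M.P s a s' * h s') (Finset.mem_univ a)
    have h4 : n k * ∑ s', M.P s a s' * g s' ≤ n k * g s :=
      mul_le_mul_of_nonneg_left (hPg_le s a) (hn0 k)
    have h5 := hbe s
    rw [hsplit k s a]
    linarith
  have bell_lb : ∀ (k : ℕ) (s : S), (∀ s', h s' - C ≤ V k s' - n k * g s') →
      h s + g s - C + n k * g s ≤ bellman M (V k) s := by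
    intro k s hlb
    have hle : M.r s (p0 s) + ∑ s', M.P s (p0 s) s' * V k s' ≤ bellman M (V k) s :=
      Finset.le_sup' (fun a => M.r s a + ∑ s', M.P s a s' * V k s') (Finset.mem_univ (p0 s))
    have h1 : ∑ s', M.P s (p0 s) s' * (h s' - C) ≤ ∑ s', M.P s (p0 s) s' * (V k s' - n k * g s') :=
      Finset.sum_le_sum fun s' _ => mul_le_mul_of_nonneg_left (hlb s') (M.P_nonneg s (p0 s) s')
    have h2 : ∑ s', M.P s (p0 s) s' * (h s' - C) = (∑ s', M.P s (p0 s) s' * h s') - C := by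
      rw [show (∑ s', M.P s (p0 s) s' * (h s' - C)) =
          (∑ s', M.P s (p0 s) s' * h s') - (∑ s', M.P s (p0 s) s') * C by
        rw [Finset.sum_mul, ← Finset.sum_sub_distrib]
        exact Finset.sum_congr rfl fun s' _ => by ring]
      rw [M.P_sum_one, one_mul]
    have h4 := hp0good s
    have h5 := hp0h' s
    have h6 := hsplit k s (p0 s)
    rw [h4] at h6
    linarith
  -- key sandwich bound
  have key : ∀ (k : ℕ) (s : S), h s - C ≤ V k s - n k * g s ∧ V k s - n k * g s ≤ h s + C := by
    intro k
    induction k with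
    | zero =>
      intro s
      have := abs_le.mp (hCb s)
      rw [hnzero]
      constructor <;> linarith [this.1, this.2]
    | succ k ih =>
      intro s
      have hVs : V (k + 1) s = lam (k + 1) * V k s + (1 - lam (k + 1)) * bellman M (V k) s := by
        rw [hV k]; simp [smul_eq_mul]
      have hμ := hlam (k + 1) (Nat.le_add_left 1 k)
      have hμ0 : 0 ≤ lam (k + 1) := hμ.1
      have hμ1 : lam (k + 1) < 1 := hμ.2
      have hub := bell_ub k s fun s' => (ih s').2
      have hlb := bell_lb k s fun s' => (ih s').1
      have ihs := ih s
      have hns := hnsucc k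
      constructor
      · have e1 : lam (k + 1) * (h s - C + n k * g s) ≤ lam (k + 1) * V k s :=
          mul_le_mul_of_nonneg_left (by linarith [ihs.1]) hμ0
        have e2 : (1 - lam (k + 1)) * (h s + g s - C + n k * g s) ≤
            (1 - lam (k + 1)) * bellman M (V k) s :=
          mul_le_mul_of_nonneg_left hlb (by linarith)
        calc h s - C
            = lam (k + 1) * (h s - C + n k * g s)
              + (1 - lam (k + 1)) * (h s + g s - C + n k * g s) - n (k + 1) * g s := by
              rw [hns]; ring
          _ ≤ lam (k + 1) * V k s + (1 - lam (k + 1)) * bellman M (V k) s - n (k + 1) * g s := by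
              linarith
          _ = V (k + 1) s - n (k + 1) * g s := by rw [hVs]
      · have e1 : lam (k + 1) * V k s ≤ lam (k + 1) * (h s + C + n k * g s) :=
          mul_le_mul_of_nonneg_left (by linarith [ihs.2]) hμ0
        have e2 : (1 - lam (k + 1)) * bellman M (V k) s ≤
            (1 - lam (k + 1)) * (h s + g s + C + n k * g s) :=
          mul_le_mul_of_nonneg_left hub (by linarith)
        calc V (k + 1) s - n (k + 1) * g s
            = lam (k + 1) * V k s + (1 - lam (k + 1)) * bellman M (V k) s - n (k + 1) * g s := by
              rw [hVs]
          _ ≤ lam (k + 1) * (h s + C + n k * g s)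
              + (1 - lam (k + 1)) * (h s + g s + C + n k * g s) - n (k + 1) * g s := by
              linarith
          _ = h s + C := by rw [hns]; ring
  have lower : ∀ (k : ℕ) (s : S), h s + g s - C + n k * g s ≤ bellman M (V k) s :=
    fun k s => bell_lb k s fun s' => (key k s').1
  -- the gap δ
  set Bad : Finset (S × A) :=
    Finset.univ.filter (fun q => ∑ s', M.P q.1 q.2 s' * g s' < g q.1) with hBad
  set δ : ℝ := if hB : Bad.Nonempty then
      Bad.inf' hB (fun q => g q.1 - ∑ s', M.P q.1 q.2 s' * g s') else 1 with hδ
  have hδpos : 0 < δ := by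
    rw [hδ]
    split_ifs with hB
    · rw [Finset.lt_inf'_iff]
      intro q hq
      have := (Finset.mem_filter.mp hq).2
      linarith
    · norm_num
  have hδle : ∀ s a, (∑ s', M.P s a s' * g s' < g s) → δ ≤ g s - ∑ s', M.P s a s' * g s' := by
    intro s a hlt
    have hq : (s, a) ∈ Bad := Finset.mem_filter.mpr ⟨Finset.mem_univ _, hlt⟩
    rw [hδ, dif_pos ⟨(s, a), hq⟩]
    exact Finset.inf'_le _ hq
  set D : ℝ := (Finset.univ : Finset (S × A)).sup' Finset.univ_nonempty
      (fun q => M.r q.1 q.2 + Hmax + 2 * C - h q.1 - g q.1) with hD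
  have hDb : ∀ s a, M.r s a + Hmax + 2 * C - h s - g s ≤ D := fun s a => by
    rw [hD]
    exact Finset.le_sup' (fun q : S × A => M.r q.1 q.2 + Hmax + 2 * C - h q.1 - g q.1)
      (Finset.mem_univ (s, a))
  -- choose K with n K * δ > D
  have hcob : Filter.IsBoundedUnder (· ≤ ·) Filter.atTop lam := by
    refine ⟨1, Filter.eventually_map.2 ?_⟩
    filter_upwards [Filter.eventually_ge_atTop 1] with j hj
    exact le_of_lt (hlam j hj).2
  obtain ⟨b, hb1, hb2⟩ : ∃ b : ℝ, Filter.limsup lam Filter.atTop < b ∧ b < 1 :=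
    ⟨(Filter.limsup lam Filter.atTop + 1) / 2, by linarith, by linarith⟩
  obtain ⟨J, hJ⟩ := (Filter.eventually_atTop).mp (Filter.eventually_lt_of_limsup_lt hb1 hcob)
  have hgrow : ∀ m : ℕ, (m : ℝ) * (1 - b) ≤ n (J + m) := by
    intro m
    induction m with
    | zero => simpa using hn0 J
    | succ m ih =>
      have hlt : lam (J + m + 1) < b := hJ (J + m + 1) (by omega)
      have := hnsucc (J + m)
      push_cast
      have : n (J + (m + 1)) = n (J + m) + (1 - lam (J + m + 1)) := by
        rw [show J + (m + 1) = (J + m) + 1 by omega]; exact hnsucc (J + m)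
      rw [this]
      linarith
  obtain ⟨m, hm⟩ := exists_nat_gt (D / (δ * (1 - b)))
  have hKval : D < n (J + m) * δ := by
    have hpos : 0 < δ * (1 - b) := mul_pos hδpos (by linarith)
    have h1 : D < (m : ℝ) * (δ * (1 - b)) := (div_lt_iff₀ hpos).mp hm
    have h2 : (m : ℝ) * (1 - b) * δ ≤ n (J + m) * δ :=
      mul_le_mul_of_nonneg_right (hgrow m) (le_of_lt hδpos)
    nlinarith
  refine ⟨J + m, ?_⟩
  intro k hk s
  have hnk : D < n k * δ :=
    lt_of_lt_of_le hKval (mul_le_mul_of_nonneg_right (hnmono hk) (le_of_lt hδpos))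
  -- the maximizing action is good
  obtain ⟨a, -, ha⟩ := Finset.exists_mem_eq_sup' (Finset.univ_nonempty (α := A))
    (fun a => M.r s a + ∑ s', M.P s a s' * V k s')
  have hagood : ∑ s', M.P s a s' * g s' = g s := by
    by_contra hne
    have hlt : ∑ s', M.P s a s' * g s' < g s := lt_of_le_of_ne (hPg_le s a) hne
    have hgap := hδle s a hlt
    -- upper bound the bad action value
    have h1 : ∑ s', M.P s a s' * (V k s' - n k * g s') ≤ Hmax + C := by
      calc ∑ s', M.P s a s' * (V k s' - n k * g s')
          ≤ ∑ s', M.P s a s' * (Hmax + C) :=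
            Finset.sum_le_sum fun s' _ => mul_le_mul_of_nonneg_left
              (by linarith [(key k s').2, hHmax s']) (M.P_nonneg s a s')
        _ = Hmax + C := by rw [← Finset.sum_mul, M.P_sum_one, one_mul]
    have h2 : n k * (∑ s', M.P s a s' * g s') ≤ n k * (g s - δ) :=
      mul_le_mul_of_nonneg_left (by linarith) (hn0 k)
    have h3 := hsplit k s a
    have h4 := lower k s
    have h5 := hDb s a
    have h6 : bellman M (V k) s = M.r s a + ∑ s', M.P s a s' * V k s' := ha
    linarith
  -- construct the witness policy
  set p : S → A := fun s' => if s' = s then a else p0 s' with hp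
  constructor
  · refine ⟨p, ?_, ?_⟩
    · funext s'
      by_cases hss : s' = s
      · subst hss; simpa [Pop, hp] using hagood
      · simpa [Pop, hp, hss] using hp0good s'
    · simp [rPol, Pop, hp]; exact ha
  · rintro x ⟨q, hqg, rfl⟩
    simp only [Pi.add_apply, rPol, Pop, bellman]
    exact Finset.le_sup' (fun a => M.r s a + ∑ s', M.P s a s' * V k s') (Finset.mem_univ (q s))
end
end
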